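/- Let A be a d×d real expansive matrix (all eigenvalues have modulus > 1). Then there exist a real number r > 1 and an ellipsoid Δ = {x ∈ ℝ^d : |Px| < 1} for some invertible d×d matrix P, with Lebesgue measure |Δ| = 1, such that Δ ⊂ rΔ ⊂ AΔ. -/

import Mathlib

open MeasureTheory Set ENNReal
open scoped Pointwise
open scoped NNReal

/-- The Euclidean norm on `Fin d → ℝ`. -/
noncomputable def euclNorm {n : ℕ} (x : Fin n → ℝ) : ℝ := Real.sqrt (∑ i, x i ^ 2)

lemma exists_sqrt_aux {d : ℕ} (S : Matrix (Fin d) (Fin d) ℝ) (hS : S.PosSemidef) :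
    ∃ Q : Matrix (Fin d) (Fin d) ℝ, Q * Q = S ∧ Q.IsHermitian := by
  open scoped MatrixOrder in
  exact ⟨CFC.sqrt S, CFC.sqrt_mul_sqrt_self S hS.nonneg, (Matrix.nonneg_iff_posSemidef.mp (CFC.sqrt_nonneg S)).1⟩

namespace ExpAux
open scoped Matrix

attribute [local instance] Matrix.frobeniusSeminormedAddCommGroup
  Matrix.frobeniusNormedAddCommGroup Matrix.frobeniusNormedRing
  Matrix.frobeniusNormedSpace Matrix.frobeniusNormedAlgebra

variable {d : ℕ}

lemma euclNorm_nonneg (x : Fin d → ℝ) : 0 ≤ euclNorm x := Real.sqrt_nonneg _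

lemma euclNorm_sq (x : Fin d → ℝ) : euclNorm x ^ 2 = ∑ i, x i ^ 2 :=
  Real.sq_sqrt (Finset.sum_nonneg fun i _ => sq_nonneg _)

lemma euclNorm_smul (c : ℝ) (x : Fin d → ℝ) : euclNorm (c • x) = |c| * euclNorm x := by
  unfold euclNorm
  have : ∑ i, (c • x) i ^ 2 = c ^ 2 * ∑ i, x i ^ 2 := by
    rw [Finset.mul_sum]; congr 1; ext i; simp [mul_pow]
  rw [this, Real.sqrt_mul (sq_nonneg c), Real.sqrt_sq_eq_abs]

lemma euclNorm_eq_sqrt_dot (x : Fin d → ℝ) : euclNorm x = Real.sqrt (x ⬝ᵥ x) := by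
  unfold euclNorm dotProduct
  congr 1
  exact Finset.sum_congr rfl fun i _ => sq (x i)

lemma dot_self_nonneg (x : Fin d → ℝ) : 0 ≤ x ⬝ᵥ x :=
  Finset.sum_nonneg fun i _ => mul_self_nonneg _

lemma dot_self_eq_sum_sq (x : Fin d → ℝ) : x ⬝ᵥ x = ∑ i, x i ^ 2 :=
  Finset.sum_congr rfl fun i _ => (sq (x i)).symm

lemma dot_mulVec_self (Q : Matrix (Fin d) (Fin d) ℝ) (x : Fin d → ℝ) :
    (Q.mulVec x) ⬝ᵥ (Q.mulVec x) = x ⬝ᵥ ((Qᵀ * Q).mulVec x) := by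
  rw [← Matrix.mulVec_mulVec, Matrix.dotProduct_mulVec x, Matrix.vecMul_transpose]

lemma frobenius_norm_sq (M : Matrix (Fin d) (Fin d) ℝ) :
    ‖M‖ ^ 2 = ∑ i, ∑ j, M i j ^ 2 := by
  have h1 : ∀ (i j : Fin d), ‖M i j‖ ^ (2:ℝ) = M i j ^ 2 := fun i j => by
    rw [show ((2:ℝ) = ((2:ℕ):ℝ)) by norm_num, Real.rpow_natCast]; simp [sq_abs]
  rw [Matrix.frobenius_norm_def]
  simp_rw [h1]
  rw [← Real.sqrt_eq_rpow]; exact Real.sq_sqrt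
    (Finset.sum_nonneg fun i _ => Finset.sum_nonneg fun j _ => sq_nonneg _)

lemma dot_mulVec_le (M : Matrix (Fin d) (Fin d) ℝ) (x : Fin d → ℝ) :
    (M.mulVec x) ⬝ᵥ (M.mulVec x) ≤ ‖M‖ ^ 2 * (x ⬝ᵥ x) := by
  rw [dot_self_eq_sum_sq, frobenius_norm_sq, dot_self_eq_sum_sq, Finset.sum_mul]
  apply Finset.sum_le_sum
  intro i _
  have := Finset.sum_mul_sq_le_sq_mul_sq Finset.univ (fun j => M i j) x
  simpa [Matrix.mulVec, dotProduct] using this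


lemma nnnorm_map_complex (M : Matrix (Fin d) (Fin d) ℝ) :
    ‖M.map (algebraMap ℝ ℂ)‖₊ = ‖M‖₊ :=
  Matrix.frobenius_nnnorm_map_eq _ _ fun a => by
    simp [Complex.nnnorm_real]

lemma exists_pow_norm_le (hd : 0 < d) (B : Matrix (Fin d) (Fin d) ℝ)
    (hspec : ∀ μ ∈ spectrum ℂ (B.map (algebraMap ℝ ℂ)), ‖μ‖₊ < 1) :
    ∃ l : ℝ≥0, l < 1 ∧ ∀ᶠ n : ℕ in Filter.atTop, ‖B ^ n‖ ≤ (l:ℝ) ^ n := by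
  haveI : Nonempty (Fin d) := Fin.pos_iff_nonempty.mp hd
  set Bc := B.map (algebraMap ℝ ℂ) with hBc
  have hρ : spectralRadius ℂ Bc < 1 := by
    have := spectrum.spectralRadius_lt_of_forall_lt Bc (r := 1) hspec
    simpa using this
  obtain ⟨l, hl1, hl2⟩ := ENNReal.lt_iff_exists_nnreal_btwn.mp hρ
  have hl01 : l < 1 := by exact_mod_cast hl2
  refine ⟨l, hl01, ?_⟩
  have hg := spectrum.pow_nnnorm_pow_one_div_tendsto_nhds_spectralRadius Bc
  have hev1 := hg.eventually_lt_const hl1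
  filter_upwards [hev1, Filter.eventually_ge_atTop 1] with n hn hn1
  have hBn : ‖Bc ^ n‖₊ = ‖B ^ n‖₊ := by
    have h2 := map_pow (RingHom.mapMatrix (algebraMap ℝ ℂ)) B n
    simp only [RingHom.mapMatrix_apply] at h2
    rw [hBc, ← h2, nnnorm_map_complex]
  rw [hBn] at hn
  have hne : (n : ℝ) ≠ 0 := Nat.cast_ne_zero.mpr (by omega)
  have hx : ((‖B ^ n‖₊ : ℝ≥0∞)) ≤ (l : ℝ≥0∞) ^ (n : ℕ) := by
    calc (‖B ^ n‖₊ : ℝ≥0∞) = ((‖B ^ n‖₊ : ℝ≥0∞) ^ (1/(n:ℝ))) ^ (n:ℝ) := by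
          rw [← ENNReal.rpow_mul, one_div, inv_mul_cancel₀ hne, ENNReal.rpow_one]
      _ ≤ (l : ℝ≥0∞) ^ (n:ℝ) := ENNReal.rpow_le_rpow hn.le (by positivity)
      _ = (l : ℝ≥0∞) ^ (n : ℕ) := by rw [ENNReal.rpow_natCast]
  rw [← ENNReal.coe_pow, ENNReal.coe_le_coe] at hx
  calc ‖B ^ n‖ = ((‖B ^ n‖₊ : ℝ≥0) : ℝ) := rfl
    _ ≤ ((l ^ n : ℝ≥0) : ℝ) := by exact_mod_cast hx
    _ = (l:ℝ) ^ n := by push_cast; ring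

lemma summable_stuff (hd : 0 < d) (B : Matrix (Fin d) (Fin d) ℝ)
    (hspec : ∀ μ ∈ spectrum ℂ (B.map (algebraMap ℝ ℂ)), ‖μ‖₊ < 1) :
    Summable (fun k : ℕ => ‖B ^ k‖ ^ 2) ∧
      Summable (fun k : ℕ => (B ^ k)ᵀ * (B ^ k)) := by
  obtain ⟨l, hl1, hev⟩ := exists_pow_norm_le hd B hspec
  have hgeo : Summable (fun k : ℕ => ((l:ℝ) ^ 2) ^ k) := by
    apply summable_geometric_of_lt_one (by positivity)
    have : (l:ℝ) < 1 := by exact_mod_cast hl1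
    nlinarith [l.coe_nonneg]
  have hbound : ∀ᶠ k : ℕ in Filter.cofinite, ‖B ^ k‖ ^ 2 ≤ ((l:ℝ) ^ 2) ^ k := by
    rw [Nat.cofinite_eq_atTop]
    filter_upwards [hev] with k hk
    have h0 : (0:ℝ) ≤ ‖B ^ k‖ := norm_nonneg _
    calc ‖B ^ k‖ ^ 2 ≤ ((l:ℝ) ^ k) ^ 2 := by nlinarith
      _ = ((l:ℝ) ^ 2) ^ k := by ring
  constructor
  · apply Summable.of_norm_bounded_eventually hgeo
    filter_upwards [hbound] with k hk
    simpa [abs_of_nonneg (sq_nonneg ‖B ^ k‖)] using hk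
  · apply Summable.of_norm_bounded_eventually hgeo
    filter_upwards [hbound] with k hk
    calc ‖(B ^ k)ᵀ * (B ^ k)‖ ≤ ‖(B ^ k)ᵀ‖ * ‖B ^ k‖ := norm_mul_le _ _
      _ = ‖B ^ k‖ ^ 2 := by rw [Matrix.frobenius_norm_transpose]; ring
      _ ≤ ((l:ℝ) ^ 2) ^ k := hk


lemma exists_contraction (hd : 0 < d) (B : Matrix (Fin d) (Fin d) ℝ)
    (hspec : ∀ μ ∈ spectrum ℂ (B.map (algebraMap ℝ ℂ)), ‖μ‖₊ < 1) :
    ∃ (Q : Matrix (Fin d) (Fin d) ℝ) (s : ℝ), Q.det ≠ 0 ∧ 0 < s ∧ s < 1 ∧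
      ∀ x, euclNorm (Q.mulVec (B.mulVec x)) ≤ s * euclNorm (Q.mulVec x) := by
  obtain ⟨hsum1, hsumM⟩ := summable_stuff hd B hspec
  set S : Matrix (Fin d) (Fin d) ℝ := ∑' k : ℕ, (B ^ k)ᵀ * (B ^ k) with hSdef
  set f : (Fin d → ℝ) → ℕ → ℝ := fun x k => ((B ^ k).mulVec x) ⬝ᵥ ((B ^ k).mulVec x) with hfdef
  -- the evaluation continuous linear map
  have key : ∀ (x : Fin d → ℝ) (M : Matrix (Fin d) (Fin d) ℝ),
      x ⬝ᵥ ((Mᵀ * M).mulVec x) = (M.mulVec x) ⬝ᵥ (M.mulVec x) :=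
    fun x M => (dot_mulVec_self M x).symm
  have hφcont : ∀ x : Fin d → ℝ, ∃ φ : Matrix (Fin d) (Fin d) ℝ →L[ℝ] ℝ,
      ∀ M, φ M = x ⬝ᵥ (M.mulVec x) := by
    intro x
    refine ⟨LinearMap.toContinuousLinearMap
      { toFun := fun M => x ⬝ᵥ (M.mulVec x)
        map_add' := fun M N => by simp [Matrix.add_mulVec, dotProduct_add]
        map_smul' := fun c M => by simp [Matrix.smul_mulVec, dotProduct_smul] },
      fun M => rfl⟩
  have hsumf : ∀ x, Summable (f x) := by
    intro x
    obtain ⟨φ, hφ⟩ := hφcont x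
    have h1 : Summable fun k => φ ((B ^ k)ᵀ * (B ^ k)) :=
      hsumM.map (φ : Matrix (Fin d) (Fin d) ℝ →L[ℝ] ℝ).toLinearMap.toAddMonoidHom φ.continuous
    exact h1.congr fun k => by rw [hφ, key]
  have hq : ∀ x, x ⬝ᵥ (S.mulVec x) = ∑' k, f x k := by
    intro x
    obtain ⟨φ, hφ⟩ := hφcont x
    have h1 : φ S = ∑' k, φ ((B ^ k)ᵀ * (B ^ k)) := φ.map_tsum hsumM
    rw [← hφ, h1]
    exact tsum_congr fun k => by rw [hφ, key]
  have hf0 : ∀ x, f x 0 = x ⬝ᵥ x := fun x => by simp [hfdef, Matrix.one_mulVec]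
  have hfnn : ∀ x k, 0 ≤ f x k := fun x k => dot_self_nonneg _
  have hqnn : ∀ x, 0 ≤ x ⬝ᵥ S.mulVec x := fun x => by
    rw [hq]; exact tsum_nonneg (hfnn x)
  have hlow : ∀ x, x ⬝ᵥ x ≤ x ⬝ᵥ S.mulVec x := by
    intro x
    rw [hq, ← hf0 x]
    exact Summable.le_tsum (hsumf x) 0 fun i _ => hfnn x i
  set K : ℝ := ∑' k : ℕ, ‖B ^ k‖ ^ 2 with hK
  set K' : ℝ := max K 2 with hK'
  have hK'2 : (2:ℝ) ≤ K' := le_max_right _ _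
  have hK'pos : (0:ℝ) < K' := by linarith
  have hup : ∀ x, x ⬝ᵥ S.mulVec x ≤ K' * (x ⬝ᵥ x) := by
    intro x
    rw [hq]
    calc ∑' k, f x k ≤ ∑' k, ‖B ^ k‖ ^ 2 * (x ⬝ᵥ x) :=
          Summable.tsum_le_tsum (fun k => dot_mulVec_le (B ^ k) x) (hsumf x) (hsum1.mul_right _)
      _ = K * (x ⬝ᵥ x) := tsum_mul_right
      _ ≤ K' * (x ⬝ᵥ x) := mul_le_mul_of_nonneg_right (le_max_left _ _) (dot_self_nonneg x)
  set c : ℝ := 1 - 1 / K' with hc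
  have hc0 : 0 < c := by
    have h1 : 1 / K' ≤ 1 / 2 := by
      apply one_div_le_one_div_of_le <;> linarith
    simp only [hc]; linarith
  have hc1 : c < 1 := by
    have : 0 < 1 / K' := by positivity
    simp only [hc]; linarith
  -- contraction inequality for the quadratic form
  have hcontr : ∀ x, (B.mulVec x) ⬝ᵥ S.mulVec (B.mulVec x) ≤ c * (x ⬝ᵥ S.mulVec x) := by
    intro x
    have hshift : ∀ k, f (B.mulVec x) k = f x (k + 1) := by
      intro k
      simp only [hfdef, Matrix.mulVec_mulVec, ← pow_succ]
    have h1 : x ⬝ᵥ S.mulVec x = f x 0 + ∑' k, f x (k + 1) := by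
      rw [hq]; exact Summable.tsum_eq_zero_add (hsumf x)
    have h2 : (B.mulVec x) ⬝ᵥ S.mulVec (B.mulVec x) = ∑' k, f x (k + 1) := by
      rw [hq]; exact tsum_congr hshift
    have h3 := hup x
    have h4 := hf0 x
    have h5 : (1 / K') * (x ⬝ᵥ S.mulVec x) ≤ x ⬝ᵥ x := by
      have := mul_le_mul_of_nonneg_left h3 (le_of_lt (by positivity : (0:ℝ) < 1 / K'))
      calc (1 / K') * (x ⬝ᵥ S.mulVec x) ≤ (1 / K') * (K' * (x ⬝ᵥ x)) := this
        _ = x ⬝ᵥ x := by field_simp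
    have hcc : c * (x ⬝ᵥ S.mulVec x) = x ⬝ᵥ S.mulVec x - (1/K') * (x ⬝ᵥ S.mulVec x) := by ring
    rw [h2, hcc]
    linarith
  -- S is positive definite
  have hST : Sᵀ = S := by
    have hψ : ∃ ψ : Matrix (Fin d) (Fin d) ℝ →L[ℝ] Matrix (Fin d) (Fin d) ℝ,
        ∀ M, ψ M = Mᵀ :=
      ⟨LinearMap.toContinuousLinearMap
        { toFun := fun M => Mᵀ
          map_add' := fun M N => Matrix.transpose_add M N
          map_smul' := fun r M => Matrix.transpose_smul r M }, fun M => rfl⟩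
    obtain ⟨ψ, hψ⟩ := hψ
    have h1 : ψ S = ∑' k, ψ ((B ^ k)ᵀ * (B ^ k)) := ψ.map_tsum hsumM
    rw [← hψ S, h1]
    refine tsum_congr fun k => ?_
    rw [hψ, Matrix.transpose_mul, Matrix.transpose_transpose]
  have hSherm : S.IsHermitian := by
    unfold Matrix.IsHermitian
    rw [Matrix.conjTranspose_eq_transpose_of_trivial, hST]
  have hSpos : S.PosDef := by
    refine Matrix.PosDef.of_dotProduct_mulVec_pos hSherm fun x hx => ?_
    have hxx : 0 < x ⬝ᵥ x := by
      obtain ⟨i, hi⟩ := Function.ne_iff.mp hx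
      have hi' : x i ≠ 0 := by simpa using hi
      exact Finset.sum_pos' (fun j _ => mul_self_nonneg _)
        ⟨i, Finset.mem_univ i, mul_self_pos.mpr hi'⟩
    simpa using lt_of_lt_of_le hxx (hlow x)
  -- the square root
  obtain ⟨Q, hQQ, hQH⟩ := exists_sqrt_aux S hSpos.posSemidef
  have hQT : Qᵀ = Q := by
    rw [← Matrix.conjTranspose_eq_transpose_of_trivial]; exact hQH
  have hdetS : 0 < S.det := hSpos.det_pos
  have hdetQ : Q.det ≠ 0 := by
    intro h
    rw [← hQQ, Matrix.det_mul, h, mul_zero] at hdetS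
    exact lt_irrefl _ hdetS
  have hNq : ∀ x, euclNorm (Q.mulVec x) = Real.sqrt (x ⬝ᵥ S.mulVec x) := by
    intro x
    rw [euclNorm_eq_sqrt_dot, dot_mulVec_self, hQT, hQQ]
  refine ⟨Q, Real.sqrt c, hdetQ, Real.sqrt_pos.mpr hc0, ?_, ?_⟩
  · calc Real.sqrt c < Real.sqrt 1 := Real.sqrt_lt_sqrt hc0.le hc1
      _ = 1 := Real.sqrt_one
  · intro x
    rw [hNq, hNq]
    calc Real.sqrt ((B.mulVec x) ⬝ᵥ S.mulVec (B.mulVec x))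
        ≤ Real.sqrt (c * (x ⬝ᵥ S.mulVec x)) := Real.sqrt_le_sqrt (hcontr x)
      _ = Real.sqrt c * Real.sqrt (x ⬝ᵥ S.mulVec x) := Real.sqrt_mul hc0.le _


lemma volume_unitBall_eq :
    volume {y : Fin d → ℝ | euclNorm y < 1} =
      volume (Metric.ball (0 : EuclideanSpace ℝ (Fin d)) 1) := by
  have h := (EuclideanSpace.volume_preserving_symm_measurableEquiv_toLp (Fin d)).symm
  rw [← h.measure_preimage measurableSet_ball.nullMeasurableSet]
  congr 1
  ext y
  simp only [mem_preimage, Metric.mem_ball, dist_zero_right, mem_setOf_eq]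
  rw [EuclideanSpace.norm_eq]
  have : ∀ i, ((MeasurableEquiv.toLp 2 (Fin d → ℝ)).symm.symm y) i = y i := by
    intro i
    rfl
  unfold euclNorm
  simp_rw [this, Real.norm_eq_abs, sq_abs]

lemma volume_unitBall_pos : 0 < volume {y : Fin d → ℝ | euclNorm y < 1} := by
  rw [volume_unitBall_eq]
  exact Metric.measure_ball_pos volume 0 one_pos

lemma volume_unitBall_lt_top : volume {y : Fin d → ℝ | euclNorm y < 1} < ⊤ := by
  rw [volume_unitBall_eq]
  exact measure_ball_lt_top

lemma volume_ellipsoid (P : Matrix (Fin d) (Fin d) ℝ) (hP : P.det ≠ 0) :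
    volume {x : Fin d → ℝ | euclNorm (P.mulVec x) < 1} =
      ENNReal.ofReal |P.det|⁻¹ * volume {y : Fin d → ℝ | euclNorm y < 1} := by
  have hset : {x : Fin d → ℝ | euclNorm (P.mulVec x) < 1} =
      (Matrix.toLin' P) ⁻¹' {y : Fin d → ℝ | euclNorm y < 1} := by
    ext x
    simp [Matrix.toLin'_apply]
  have hdet : LinearMap.det (Matrix.toLin' P) ≠ 0 := by
    rwa [LinearMap.det_toLin']
  rw [hset, MeasureTheory.Measure.addHaar_preimage_linearMap volume hdet, LinearMap.det_toLin',
    abs_inv]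

end ExpAux


/-- For any expansive matrix `A` (all eigenvalues of modulus `> 1`) there exist
`r > 1` and an ellipsoid `Δ = {x : |Px| < 1}` (`P` invertible) of Lebesgue measure `1` with
`Δ ⊆ rΔ ⊆ AΔ`. -/
theorem expansive_exists_ellipsoid (d : ℕ) (A : Matrix (Fin d) (Fin d) ℝ)
    (hA : ∀ μ ∈ spectrum ℂ (A.map (algebraMap ℝ ℂ)), 1 < ‖μ‖) :
    ∃ (r : ℝ) (P : Matrix (Fin d) (Fin d) ℝ), 1 < r ∧ IsUnit P.det ∧
      volume {x : Fin d → ℝ | euclNorm (P.mulVec x) < 1} = 1 ∧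
      {x : Fin d → ℝ | euclNorm (P.mulVec x) < 1}
        ⊆ r • {x : Fin d → ℝ | euclNorm (P.mulVec x) < 1} ∧
      r • {x : Fin d → ℝ | euclNorm (P.mulVec x) < 1}
        ⊆ A.mulVec '' {x : Fin d → ℝ | euclNorm (P.mulVec x) < 1} := by
  rcases Nat.eq_zero_or_pos d with hd | hd
  · subst hd
    have hset : {x : Fin 0 → ℝ | euclNorm ((1 : Matrix (Fin 0) (Fin 0) ℝ).mulVec x) < 1} =
        univ := by
      ext x
      simp [euclNorm]
    refine ⟨2, 1, one_lt_two, by simp, ?_, ?_, ?_⟩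
    · rw [hset, MeasureTheory.volume_pi, MeasureTheory.Measure.pi_univ]
      simp
    · rw [hset]
      intro y _
      have : y = (2:ℝ) • ((2:ℝ)⁻¹ • y) := by
        rw [smul_smul]; norm_num
      rw [this]
      exact Set.smul_mem_smul_set (mem_univ _)
    · rw [hset]
      intro y _
      exact ⟨y, mem_univ _, funext fun i => i.elim0⟩
  · haveI : Nonempty (Fin d) := Fin.pos_iff_nonempty.mp hd
    set Ac := A.map (algebraMap ℝ ℂ) with hAcdef
    have hAcUnit : IsUnit Ac := by
      rw [← spectrum.zero_notMem_iff ℂ]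
      intro h0
      have := hA 0 h0
      norm_num at this
    have hdetA : IsUnit A.det := by
      have h1 : IsUnit Ac.det := Ac.isUnit_iff_isUnit_det.mp hAcUnit
      have h2 : (algebraMap ℝ ℂ) A.det = Ac.det := RingHom.map_det (algebraMap ℝ ℂ) A
      have h3 : (algebraMap ℝ ℂ) A.det ≠ 0 := by
        rw [h2]; exact h1.ne_zero
      refine isUnit_iff_ne_zero.mpr fun h => h3 ?_
      rw [h, map_zero]
    set B := A⁻¹ with hBdef
    have hAB : A * B = 1 := Matrix.mul_nonsing_inv A hdetA
    have hBA : B * A = 1 := Matrix.nonsing_inv_mul A hdetA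
    set Bc := B.map (algebraMap ℝ ℂ) with hBcdef
    have hmapmul : ∀ M N : Matrix (Fin d) (Fin d) ℝ,
        (M * N).map (algebraMap ℝ ℂ) = M.map (algebraMap ℝ ℂ) * N.map (algebraMap ℝ ℂ) :=
      fun M N => by
        simpa [RingHom.mapMatrix_apply] using map_mul (RingHom.mapMatrix (algebraMap ℝ ℂ)) M N
    have hmapone : (1 : Matrix (Fin d) (Fin d) ℝ).map (algebraMap ℝ ℂ) = 1 :=
      Matrix.map_one _ (map_zero _) (map_one _)
    have hAcBc : Ac * Bc = 1 := by rw [hAcdef, hBcdef, ← hmapmul, hAB, hmapone]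
    have hBcAc : Bc * Ac = 1 := by rw [hAcdef, hBcdef, ← hmapmul, hBA, hmapone]
    have hspecB : ∀ μ ∈ spectrum ℂ Bc, ‖μ‖₊ < 1 := by
      intro μ hμ
      set u : (Matrix (Fin d) (Fin d) ℂ)ˣ := ⟨Ac, Bc, hAcBc, hBcAc⟩ with hu
      have hBcUnit : IsUnit Bc := ⟨u⁻¹, rfl⟩
      have hμ0 : μ ≠ 0 := by
        rintro rfl
        exact (spectrum.zero_notMem_iff ℂ).mpr hBcUnit hμ
      have hiff := spectrum.inv_mem_iff (R := ℂ) (r := Units.mk0 μ hμ0) (a := u⁻¹)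
      have hμinv : μ⁻¹ ∈ spectrum ℂ Ac := by
        have hval : (↑u⁻¹ : Matrix (Fin d) (Fin d) ℂ) = Bc := rfl
        have h4 := hiff.mp (show ((Units.mk0 μ hμ0 : ℂˣ) : ℂ) ∈
          spectrum ℂ (↑u⁻¹ : Matrix (Fin d) (Fin d) ℂ) from hval ▸ hμ)
        have hval2 : ((u⁻¹)⁻¹ : (Matrix (Fin d) (Fin d) ℂ)ˣ) = u := inv_inv u
        rw [hval2] at h4
        rw [Units.val_inv_eq_inv_val, Units.val_mk0] at h4; exact h4
      have h1 := hA μ⁻¹ hμinv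
      rw [norm_inv] at h1
      have h2 : 0 < ‖μ‖ := norm_pos_iff.mpr hμ0
      have habs : ‖μ‖ < 1 := by
        by_contra h3
        push_neg at h3
        have h4 : (‖μ‖)⁻¹ ≤ 1 := inv_le_one_of_one_le₀ h3
        linarith
      have h5 : ‖μ‖ < 1 := habs
      exact_mod_cast h5
    obtain ⟨Q, s, hdetQ, hs0, hs1, hcontr⟩ := ExpAux.exists_contraction hd B hspecB
    set V := volume {y : Fin d → ℝ | euclNorm y < 1} with hV
    have hV0 : 0 < V := ExpAux.volume_unitBall_pos
    have hVtop : V < ⊤ := ExpAux.volume_unitBall_lt_top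
    set Vr := V.toReal with hVr
    have hVr0 : 0 < Vr := ENNReal.toReal_pos hV0.ne' hVtop.ne
    have habsQ : 0 < |Q.det| := abs_pos.mpr hdetQ
    set t : ℝ := (Vr / |Q.det|) ^ ((d:ℝ)⁻¹) with ht
    have ht0 : 0 < t := Real.rpow_pos_of_pos (by positivity) _
    have htd : t ^ d = Vr / |Q.det| := by
      rw [ht, ← Real.rpow_natCast ((Vr / |Q.det|) ^ ((d:ℝ)⁻¹)) d, ← Real.rpow_mul (by positivity),
        inv_mul_cancel₀ (Nat.cast_ne_zero.mpr hd.ne'), Real.rpow_one]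
    set P : Matrix (Fin d) (Fin d) ℝ := t • Q with hP
    have hdetP : P.det = t ^ d * Q.det := by
      rw [hP, Matrix.det_smul]; simp [Fintype.card_fin]
    have hdetPne : P.det ≠ 0 := by
      rw [hdetP]; exact mul_ne_zero (pow_ne_zero _ ht0.ne') hdetQ
    have habsP : |P.det| = Vr := by
      rw [hdetP, abs_mul, abs_of_pos (pow_pos ht0 d), htd, div_mul_cancel₀ _ habsQ.ne']
    have hPN : ∀ x, euclNorm (P.mulVec x) = t * euclNorm (Q.mulVec x) := by
      intro x
      rw [hP, Matrix.smul_mulVec, ExpAux.euclNorm_smul, abs_of_pos ht0]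
    set r : ℝ := s⁻¹ with hr
    have hr1 : 1 < r := one_lt_inv_iff₀.mpr ⟨hs0, hs1⟩
    refine ⟨r, P, hr1, isUnit_iff_ne_zero.mpr hdetPne, ?_, ?_, ?_⟩
    · rw [ExpAux.volume_ellipsoid P hdetPne, habsP, ENNReal.ofReal_inv_of_pos hVr0,
        ENNReal.ofReal_toReal hVtop.ne, ← hV]
      exact ENNReal.inv_mul_cancel hV0.ne' hVtop.ne
    · intro x hx
      simp only [mem_setOf_eq] at hx
      have hmem : s • x ∈ {x : Fin d → ℝ | euclNorm (P.mulVec x) < 1} := by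
        simp only [mem_setOf_eq]
        rw [Matrix.mulVec_smul, ExpAux.euclNorm_smul, abs_of_pos hs0]
        calc s * euclNorm (P.mulVec x) ≤ 1 * euclNorm (P.mulVec x) :=
              mul_le_mul_of_nonneg_right hs1.le (ExpAux.euclNorm_nonneg _)
          _ = euclNorm (P.mulVec x) := one_mul _
          _ < 1 := hx
      have hxe : x = r • (s • x) := by
        rw [smul_smul, hr, inv_mul_cancel₀ hs0.ne', one_smul]
      rw [hxe]
      exact Set.smul_mem_smul_set hmem
    · intro y hy
      obtain ⟨z, hz, rfl⟩ := hy
      simp only [mem_setOf_eq] at hz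
      refine ⟨B.mulVec (r • z), ?_, ?_⟩
      · simp only [mem_setOf_eq]
        rw [hPN]
        have hr0 : (0:ℝ) < r := by rw [hr]; positivity
        have h2 : euclNorm (Q.mulVec (r • z)) = r * euclNorm (Q.mulVec z) := by
          rw [Matrix.mulVec_smul, ExpAux.euclNorm_smul, abs_of_pos hr0]
        have h3 : euclNorm (Q.mulVec (B.mulVec (r • z))) ≤ euclNorm (Q.mulVec z) := by
          refine (hcontr (r • z)).trans (le_of_eq ?_)
          rw [h2, ← mul_assoc, hr, mul_inv_cancel₀ hs0.ne', one_mul]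
        calc t * euclNorm (Q.mulVec (B.mulVec (r • z))) ≤ t * euclNorm (Q.mulVec z) :=
              mul_le_mul_of_nonneg_left h3 ht0.le
          _ = euclNorm (P.mulVec z) := (hPN z).symm
          _ < 1 := hz
      · rw [Matrix.mulVec_mulVec, hAB, Matrix.one_mulVec]
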